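/- Suppose y : ℝ → ℝⁿ solves the linear system ẏ = My + w and x(t) := y(t)/(y(t)ᵀBy(t)) is defined (y(t)ᵀBy(t) ≠ 0) on an interval, where B is symmetric and MᵀB + BM = -λB. Then x satisfies ẋᵢ = (mᵢᵀ + λeᵢᵀ)x + xᵀ(wᵢB - B(w⊗eᵢ) - (eᵢ⊗w)B)x, where mᵢᵀ is the i-th row of M. -/

import Mathlib

/-!
Write `q = yᵀBy`. Along a solution of `ẏ = My + w`, the relation `MᵀB + BM = -λB` gives
`q̇ = -λq + 2wᵀBy`, so the quotient rule yields `ẋᵢ = ((My)ᵢ + wᵢ + λyᵢ)/q - 2yᵢ(wᵀBy)/q²`.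
Since `xᵀBx = 1/q`, the term `wᵢ/q` is `wᵢ xᵀBx`, and by symmetry of `B` the quadratic form of
`B(w⊗eᵢ) + (eᵢ⊗w)B` at `x` is `2xᵢ(wᵀBx) = 2yᵢ(wᵀBy)/q²`.
-/

open Matrix

namespace Matrix

variable {R ι : Type*} [CommRing R] [Fintype ι] {B : Matrix ι ι R}

theorem IsSymm.dotProduct_mulVec_comm (hB : B.IsSymm) (u v : ι → R) :
    u ⬝ᵥ B *ᵥ v = v ⬝ᵥ B *ᵥ u := by
  rw [← dotProduct_transpose_mulVec, hB.eq]

theorem dotProduct_transpose_mul_add_mul_mulVec (B M : Matrix ι ι R) (v : ι → R) :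
    v ⬝ᵥ (Mᵀ * B + B * M) *ᵥ v = M *ᵥ v ⬝ᵥ B *ᵥ v + v ⬝ᵥ B *ᵥ (M *ᵥ v) := by
  rw [add_mulVec, dotProduct_add, ← mulVec_mulVec, ← mulVec_mulVec, dotProduct_transpose_mulVec,
    dotProduct_comm (B *ᵥ v)]

theorem IsSymm.dotProduct_smul_sub_mul_vecMulVec_sub_vecMulVec_mul_mulVec (hB : B.IsSymm)
    (c : R) (w e x : ι → R) :
    x ⬝ᵥ (c • B - B * vecMulVec w e - vecMulVec e w * B) *ᵥ x
      = c * (x ⬝ᵥ B *ᵥ x) - 2 * (e ⬝ᵥ x) * (w ⬝ᵥ B *ᵥ x) := by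
  simp only [sub_mulVec, smul_mulVec, ← mulVec_mulVec, vecMulVec_mulVec, dotProduct_sub,
    dotProduct_smul, mulVec_smul, op_smul_eq_smul, smul_eq_mul]
  rw [hB.dotProduct_mulVec_comm x w, dotProduct_comm x e]
  ring

end Matrix

section Calculus

variable {𝕜 : Type*} [NontriviallyNormedField 𝕜] {ι κ : Type*} [Fintype ι]
  {u v : 𝕜 → ι → 𝕜} {u' v' : ι → 𝕜} {t : 𝕜}

theorem HasDerivAt.dotProduct (hu : HasDerivAt u u' t) (hv : HasDerivAt v v' t) :
    HasDerivAt (fun s => u s ⬝ᵥ v s) (u' ⬝ᵥ v t + u t ⬝ᵥ v') t := by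
  have := HasDerivAt.fun_sum fun i (_ : i ∈ Finset.univ) =>
    (hasDerivAt_pi.1 hu i).fun_mul (hasDerivAt_pi.1 hv i)
  rw [Finset.sum_add_distrib] at this
  exact this

theorem HasDerivAt.const_mulVec (A : Matrix κ ι 𝕜) (hu : HasDerivAt u u' t) :
    HasDerivAt (fun s => A *ᵥ u s) (A *ᵥ u') t :=
  hasDerivAt_pi.2 fun j => by
    have := (hasDerivAt_const t (A j)).dotProduct hu
    rw [zero_dotProduct, zero_add] at this
    exact this

theorem HasDerivAt.dotProduct_mulVec_self (A : Matrix ι ι 𝕜) (hu : HasDerivAt u u' t) :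
    HasDerivAt (fun s => u s ⬝ᵥ A *ᵥ u s) (u' ⬝ᵥ A *ᵥ u t + u t ⬝ᵥ A *ᵥ u') t :=
  hu.dotProduct (hu.const_mulVec A)

theorem HasDerivAt.dotProduct_mulVec_self_of_lyapunov {B M : Matrix ι ι 𝕜} (hB : B.IsSymm)
    {l : 𝕜} (hM : Mᵀ * B + B * M = (-l) • B) {w : ι → 𝕜}
    (hu : HasDerivAt u (M *ᵥ u t + w) t) :
    HasDerivAt (fun s => u s ⬝ᵥ B *ᵥ u s) (-l * (u t ⬝ᵥ B *ᵥ u t) + 2 * (w ⬝ᵥ B *ᵥ u t)) t := by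
  convert hu.dotProduct_mulVec_self B using 1
  have := dotProduct_transpose_mul_add_mul_mulVec B M (u t)
  rw [hM, smul_mulVec, dotProduct_smul, smul_eq_mul] at this
  rw [add_dotProduct, mulVec_add, dotProduct_add, hB.dotProduct_mulVec_comm (u t) w]
  linear_combination this

end Calculus

theorem Btransform_of_linear_solves_quadratic_general {n : ℕ}
    (B M : Matrix (Fin n) (Fin n) ℝ) (hB : B.IsSymm) (l : ℝ)
    (hM : M.transpose * B + B * M = (-l) • B)
    (w : Fin n → ℝ) (I : Set ℝ)
    (y : ℝ → Fin n → ℝ)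
    (hy : ∀ t ∈ I, ∀ i, HasDerivAt (fun s => y s i) ((M.mulVec (y t) + w) i) t)
    (hq : ∀ t ∈ I, y t ⬝ᵥ B.mulVec (y t) ≠ 0)
    (x : ℝ → Fin n → ℝ)
    (hxdef : ∀ t, x t = (y t ⬝ᵥ B.mulVec (y t))⁻¹ • y t) :
    ∀ t ∈ I, ∀ i, HasDerivAt (fun s => x s i)
      ((M i + l • (Pi.single i 1 : Fin n → ℝ)) ⬝ᵥ x t +
        x t ⬝ᵥ ((w i • B - B * Matrix.vecMulVec w (Pi.single i 1)
          - Matrix.vecMulVec (Pi.single i 1) w * B)).mulVec (x t)) t := by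
  intro t ht i
  have hyt : HasDerivAt y (M *ᵥ y t + w) t := hasDerivAt_pi.2 (hy t ht)
  have hqt := hyt.dotProduct_mulVec_self_of_lyapunov hB hM
  obtain rfl : x = fun s => (y s ⬝ᵥ B *ᵥ y s)⁻¹ • y s := funext hxdef
  refine (hasDerivAt_pi.1 ((hqt.inv (hq t ht)).smul hyt) i).congr_deriv ?_
  rw [hB.dotProduct_smul_sub_mul_vecMulVec_sub_vecMulVec_mul_mulVec]
  simp only [add_dotProduct, smul_dotProduct, dotProduct_smul, single_one_dotProduct, mulVec_smul,
    Pi.add_apply, Pi.smul_apply, Pi.inv_apply, smul_eq_mul]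
  have hMi : (M *ᵥ y t) i = M i ⬝ᵥ y t := rfl
  have hq0 := hq t ht
  rw [hMi]
  field_simp
  ring

theorem Btransform_of_linear_solves_quadratic {n : ℕ}
    (B M : Matrix (Fin n) (Fin n) ℝ) (hB : B.IsSymm) (l : ℝ)
    (hM : M.transpose * B + B * M = (-l) • B)
    (w : Fin n → ℝ) (I : Set ℝ) (hI : IsOpen I)
    (y : ℝ → Fin n → ℝ)
    (hy : ∀ t ∈ I, ∀ i, HasDerivAt (fun s => y s i) ((M.mulVec (y t) + w) i) t)
    (hq : ∀ t ∈ I, y t ⬝ᵥ B.mulVec (y t) ≠ 0)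
    (x : ℝ → Fin n → ℝ)
    (hxdef : ∀ t, x t = (y t ⬝ᵥ B.mulVec (y t))⁻¹ • y t) :
    ∀ t ∈ I, ∀ i, HasDerivAt (fun s => x s i)
      ((M i + l • (Pi.single i 1 : Fin n → ℝ)) ⬝ᵥ x t +
        x t ⬝ᵥ ((w i • B - B * Matrix.vecMulVec w (Pi.single i 1)
          - Matrix.vecMulVec (Pi.single i 1) w * B)).mulVec (x t)) t :=
  Btransform_of_linear_solves_quadratic_general B M hB l hM w I y hy hq x hxdef
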